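/- arXiv:2205.14135 — 4 statements merged into one kernel-verified Lean document; each statement's English description precedes it below -/
import Mathlib

section
/- Let x^(1) ∈ ℝ^{B_1} and x^(2) ∈ ℝ^{B_2} and let x = [x^(1) x^(2)] ∈ ℝ^{B_1 + B_2} be their concatenation. Then: (i) m(x) = max(m(x^(1)), m(x^(2))); (ii) f(x) = [e^{m(x^(1)) − m(x)} f(x^(1)), e^{m(x^(2)) − m(x)} f(x^(2))] (blockwise); (iii) ℓ(x) = e^{m(x^(1)) − m(x)} ℓ(x^(1)) + e^{m(x^(2)) − m(x)} ℓ(x^(2)); and (iv) softmax(x) = f(x) / ℓ(x). -/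
/-- Row-wise softmax of a vector `x ∈ ℝ^B`: `softmax(x)_i = e^{x_i} / Σ_j e^{x_j}`. -/
noncomputable def softmax {B : ℕ} (x : Fin B → ℝ) : Fin B → ℝ :=
  fun i => Real.exp (x i) / ∑ j, Real.exp (x j)

/-- `m(x) := max_{1 ≤ i ≤ B} x_i`. -/
noncomputable def vmax {B : ℕ} (hB : 0 < B) (x : Fin B → ℝ) : ℝ :=
  Finset.univ.sup' (Finset.univ_nonempty_iff.mpr ⟨⟨0, hB⟩⟩) x

/-- `f(x)_i := e^{x_i - m(x)}`. -/
noncomputable def fvec {B : ℕ} (hB : 0 < B) (x : Fin B → ℝ) : Fin B → ℝ :=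
  fun i => Real.exp (x i - vmax hB x)

/-- `ℓ(x) := Σ_i f(x)_i`. -/
noncomputable def lsum {B : ℕ} (hB : 0 < B) (x : Fin B → ℝ) : ℝ :=
  ∑ i, fvec hB x i

/-- Softmax decomposition for the concatenation `x = [x⁽¹⁾ x⁽²⁾]`:
(i) `m(x) = max(m(x⁽¹⁾), m(x⁽²⁾))`;
(ii) `f(x) = [e^{m(x⁽¹⁾) - m(x)} f(x⁽¹⁾), e^{m(x⁽²⁾) - m(x)} f(x⁽²⁾)]` blockwise;
(iii) `ℓ(x) = e^{m(x⁽¹⁾) - m(x)} ℓ(x⁽¹⁾) + e^{m(x⁽²⁾) - m(x)} ℓ(x⁽²⁾)`;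
(iv) `softmax(x) = f(x) / ℓ(x)`. -/
theorem softmax_concat_decomposition {B₁ B₂ : ℕ} (h₁ : 0 < B₁) (h₂ : 0 < B₂)
    (x₁ : Fin B₁ → ℝ) (x₂ : Fin B₂ → ℝ) :
    vmax (by omega) (Fin.append x₁ x₂) = max (vmax h₁ x₁) (vmax h₂ x₂) ∧
    (∀ i : Fin B₁, fvec (by omega) (Fin.append x₁ x₂) (Fin.castAdd B₂ i) =
        Real.exp (vmax h₁ x₁ - vmax (by omega) (Fin.append x₁ x₂)) * fvec h₁ x₁ i) ∧
    (∀ i : Fin B₂, fvec (by omega) (Fin.append x₁ x₂) (Fin.natAdd B₁ i) =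
        Real.exp (vmax h₂ x₂ - vmax (by omega) (Fin.append x₁ x₂)) * fvec h₂ x₂ i) ∧
    lsum (by omega) (Fin.append x₁ x₂) =
        Real.exp (vmax h₁ x₁ - vmax (by omega) (Fin.append x₁ x₂)) * lsum h₁ x₁ +
        Real.exp (vmax h₂ x₂ - vmax (by omega) (Fin.append x₁ x₂)) * lsum h₂ x₂ ∧
    ∀ i, softmax (Fin.append x₁ x₂) i =
        fvec (by omega) (Fin.append x₁ x₂) i / lsum (by omega) (Fin.append x₁ x₂) := by
  have hB : 0 < B₁ + B₂ := by omega
  set x := Fin.append x₁ x₂ with hx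
  have hm : vmax hB x = max (vmax h₁ x₁) (vmax h₂ x₂) := by
    apply le_antisymm
    · apply Finset.sup'_le
      intro i _
      refine Fin.addCases (fun j => ?_) (fun j => ?_) i
      · rw [hx, Fin.append_left]
        exact le_max_of_le_left (Finset.le_sup' _ (Finset.mem_univ j))
      · rw [hx, Fin.append_right]
        exact le_max_of_le_right (Finset.le_sup' _ (Finset.mem_univ j))
    · apply max_le
      · apply Finset.sup'_le
        intro j _
        have := Finset.le_sup' x (Finset.mem_univ (Fin.castAdd B₂ j))
        rwa [hx, Fin.append_left] at this
      · apply Finset.sup'_le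
        intro j _
        have := Finset.le_sup' x (Finset.mem_univ (Fin.natAdd B₁ j))
        rwa [hx, Fin.append_right] at this
  have hf1 : ∀ i : Fin B₁, fvec hB x (Fin.castAdd B₂ i) =
      Real.exp (vmax h₁ x₁ - vmax hB x) * fvec h₁ x₁ i := by
    intro i
    simp only [fvec, hx, Fin.append_left, ← Real.exp_add]
    ring_nf
  have hf2 : ∀ i : Fin B₂, fvec hB x (Fin.natAdd B₁ i) =
      Real.exp (vmax h₂ x₂ - vmax hB x) * fvec h₂ x₂ i := by
    intro i
    simp only [fvec, hx, Fin.append_right, ← Real.exp_add]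
    ring_nf
  have hl : lsum hB x =
      Real.exp (vmax h₁ x₁ - vmax hB x) * lsum h₁ x₁ +
      Real.exp (vmax h₂ x₂ - vmax hB x) * lsum h₂ x₂ := by
    simp only [lsum, Fin.sum_univ_add, Finset.mul_sum]
    congr 1
    · exact Finset.sum_congr rfl fun i _ => hf1 i
    · exact Finset.sum_congr rfl fun i _ => hf2 i
  refine ⟨hm, hf1, hf2, hl, ?_⟩
  intro i
  haveI : Nonempty (Fin (B₁ + B₂)) := ⟨⟨0, hB⟩⟩
  have hsum : (0:ℝ) < ∑ j, Real.exp (x j) :=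
    Finset.sum_pos (fun j _ => Real.exp_pos _) Finset.univ_nonempty
  have hc : Real.exp (-(vmax hB x)) ≠ 0 := Real.exp_ne_zero _
  simp only [softmax, fvec, lsum, sub_eq_add_neg, Real.exp_add]
  rw [← Finset.sum_mul, mul_div_mul_right _ _ hc]
end

section
/- Let Q, K, V ∈ ℝ^{N × d} and S = QK^⊤ ∈ ℝ^{N × N}. Partition the column index set {1, …, N} into T_c consecutive blocks J_1, …, J_{T_c}. Define for each block j and row i: m̃^{(j)}_i := max_{l ∈ J_j} S_{il} and ℓ̃^{(j)}_i := Σ_{l ∈ J_j} e^{S_{il} − m̃^{(j)}_i}. Define sequences m^{(j)}, ℓ^{(j)} ∈ ℝ^N and O^{(j)} ∈ ℝ^{N × d} by: m^{(1)} := m̃^{(1)}, ℓ^{(1)} := ℓ̃^{(1)}, O^{(1)}_{i,:} := (ℓ̃^{(1)}_i)^{-1} Σ_{l ∈ J_1} e^{S_{il} − m̃^{(1)}_i} V_{l,:}; and for 1 ≤ j < T_c: m^{(j+1)}_i := max(m^{(j)}_i, m̃^{(j+1)}_i), ℓ^{(j+1)}_i := e^{m^{(j)}_i − m^{(j+1)}_i}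 ℓ^{(j)}_i + e^{m̃^{(j+1)}_i − m^{(j+1)}_i} ℓ̃^{(j+1)}_i, and O^{(j+1)}_{i,:} := (ℓ^{(j+1)}_i)^{-1} ( ℓ^{(j)}_i e^{m^{(j)}_i − m^{(j+1)}_i} O^{(j)}_{i,:} + e^{m̃^{(j+1)}_i − m^{(j+1)}_i} Σ_{l ∈ J_{j+1}} e^{S_{il} − m̃^{(j+1)}_i} V_{l,:} ). Then for every 1 ≤ j ≤ T_c and every row i, writing C_j := J_1 ∪ ⋯ ∪ J_j: m^{(j)}_i = max_{l ∈ C_j} S_{il}, ℓ^{(j)}_i = Σ_{l ∈ C_j} e^{S_{il} − m^{(j)}_i}, and O^{(j)}_{i,:} = Σ_{l ∈ C_j} (e^{S_{il}} / Σ_{l' ∈ C_j} e^{S_{il'}}) V_{l,:}. -/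
open Matrix

/-- **Loop invariant of the FlashAttention forward pass (Algorithm 1).**

The columns `{1, …, N}` of `S = QKᵀ` are partitioned into `T_c` consecutive blocks
`J_1, …, J_{T_c}` (given by boundaries `b 0 = 0 < b 1 < ⋯ < b T_c = N`, with
`J j = {l | b (j-1) ≤ l < b j}`).  For each block `j` and row `i`,
`m̃ʲᵢ := max_{l ∈ J_j} S_{il}` and `ℓ̃ʲᵢ := Σ_{l ∈ J_j} e^{S_{il} - m̃ʲᵢ}`, and the running
statistics `m, ℓ, O` follow the stated recursion.  Then for every `1 ≤ j ≤ T_c` and every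
row `i`, writing `C_j := J_1 ∪ ⋯ ∪ J_j = {l | l < b j}`:
`mʲᵢ = max_{l ∈ C_j} S_{il}`, `ℓʲᵢ = Σ_{l ∈ C_j} e^{S_{il} - mʲᵢ}`, and
`Oʲᵢ,: = Σ_{l ∈ C_j} (e^{S_{il}} / Σ_{l' ∈ C_j} e^{S_{il'}}) V_{l,:}`. -/
theorem flash_attention_loop_invariant
    {N d Tc : ℕ} (hTc : 1 ≤ Tc)
    (Q K V : Matrix (Fin N) (Fin d) ℝ)
    (S : Matrix (Fin N) (Fin N) ℝ) (hS : S = Q * Kᵀ)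
    (b : ℕ → ℕ) (hb0 : b 0 = 0) (hbT : b Tc = N)
    (hbmono : ∀ j < Tc, b j < b (j + 1))
    (J : ℕ → Finset (Fin N))
    (hJ : ∀ j, J j = Finset.univ.filter fun l : Fin N => b (j - 1) ≤ (l : ℕ) ∧ (l : ℕ) < b j)
    (C : ℕ → Finset (Fin N))
    (hC : ∀ j, C j = Finset.univ.filter fun l : Fin N => (l : ℕ) < b j)
    (mtil ltil m ℓ : ℕ → Fin N → ℝ)
    (O : ℕ → Fin N → Fin d → ℝ)
    (hmtil : ∀ j, 1 ≤ j → j ≤ Tc → ∀ i,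
      (∀ l ∈ J j, S i l ≤ mtil j i) ∧ ∃ l ∈ J j, S i l = mtil j i)
    (hltil : ∀ j, 1 ≤ j → j ≤ Tc → ∀ i,
      ltil j i = ∑ l ∈ J j, Real.exp (S i l - mtil j i))
    (hm1 : ∀ i, m 1 i = mtil 1 i)
    (hl1 : ∀ i, ℓ 1 i = ltil 1 i)
    (hO1 : ∀ i, O 1 i =
      (ltil 1 i)⁻¹ • ∑ l ∈ J 1, Real.exp (S i l - mtil 1 i) • V l)
    (hmrec : ∀ j, 1 ≤ j → j < Tc → ∀ i,
      m (j + 1) i = max (m j i) (mtil (j + 1) i))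
    (hlrec : ∀ j, 1 ≤ j → j < Tc → ∀ i,
      ℓ (j + 1) i = Real.exp (m j i - m (j + 1) i) * ℓ j i +
        Real.exp (mtil (j + 1) i - m (j + 1) i) * ltil (j + 1) i)
    (hOrec : ∀ j, 1 ≤ j → j < Tc → ∀ i,
      O (j + 1) i = (ℓ (j + 1) i)⁻¹ •
        ((ℓ j i * Real.exp (m j i - m (j + 1) i)) • O j i +
          Real.exp (mtil (j + 1) i - m (j + 1) i) •
            ∑ l ∈ J (j + 1), Real.exp (S i l - mtil (j + 1) i) • V l)) :
    ∀ j, 1 ≤ j → j ≤ Tc → ∀ i,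
      ((∀ l ∈ C j, S i l ≤ m j i) ∧ ∃ l ∈ C j, S i l = m j i) ∧
      ℓ j i = ∑ l ∈ C j, Real.exp (S i l - m j i) ∧
      O j i = ∑ l ∈ C j, (Real.exp (S i l) / ∑ l' ∈ C j, Real.exp (S i l')) • V l := by

  have hCsplit : ∀ j, j < Tc → C (j + 1) = C j ∪ J (j + 1) := by
    intro j hjlt
    have := hbmono j hjlt
    ext l
    simp only [hC, hJ, Finset.mem_union, Finset.mem_filter, Finset.mem_univ, true_and,
      Nat.add_sub_cancel]
    omega
  have hdisj : ∀ j, Disjoint (C j) (J (j + 1)) := by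
    intro j
    rw [Finset.disjoint_left]
    intro l hl hl'
    simp only [hC, hJ, Finset.mem_filter, Finset.mem_univ, true_and,
      Nat.add_sub_cancel] at hl hl'
    omega
  have hC1 : C 1 = J 1 := by
    ext l
    simp [hC, hJ, hb0]
  suffices H : ∀ j, 1 ≤ j → j ≤ Tc → ∀ i,
      ((∀ l ∈ C j, S i l ≤ m j i) ∧ ∃ l ∈ C j, S i l = m j i) ∧
      ℓ j i = ∑ l ∈ C j, Real.exp (S i l - m j i) ∧
      O j i = (ℓ j i)⁻¹ • ∑ l ∈ C j, Real.exp (S i l - m j i) • V l by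
    intro j hj hjT i
    obtain ⟨hmax, hl, hO⟩ := H j hj hjT i
    refine ⟨hmax, hl, ?_⟩
    obtain ⟨l₀, hl₀, _⟩ := hmax.2
    have hTpos : 0 < ∑ l' ∈ C j, Real.exp (S i l') :=
      Finset.sum_pos (fun l _ => Real.exp_pos _) ⟨l₀, hl₀⟩
    have hlval : ℓ j i = Real.exp (-(m j i)) * ∑ l' ∈ C j, Real.exp (S i l') := by
      rw [hl, Finset.mul_sum]
      refine Finset.sum_congr rfl fun l _ => ?_
      rw [← Real.exp_add]
      ring_nf
    rw [hO, Finset.smul_sum]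
    refine Finset.sum_congr rfl fun l _ => ?_
    rw [smul_smul]
    congr 1
    rw [hlval, Real.exp_sub]
    have h1 := Real.exp_ne_zero (m j i)
    have h2 := Real.exp_ne_zero (-(m j i))
    rw [Real.exp_neg]
    field_simp
  intro j hj
  induction j, hj using Nat.le_induction with
  | base =>
    intro hT i
    obtain ⟨hub, hex⟩ := hmtil 1 le_rfl hT i
    rw [hC1]
    refine ⟨⟨fun l hl => (hm1 i) ▸ hub l hl, ?_⟩, ?_, ?_⟩
    · obtain ⟨l, hl, he⟩ := hex
      exact ⟨l, hl, by rw [he, hm1]⟩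
    · rw [hl1, hltil 1 le_rfl hT i, hm1]
    · rw [hO1, hl1, hm1]
  | succ j hj ih =>
    intro hT i
    have hjlt : j < Tc := hT
    obtain ⟨⟨hub, hex⟩, hlj, hOj⟩ := ih (le_of_lt hjlt) i
    obtain ⟨hub', hex'⟩ := hmtil (j + 1) (by omega) hT i
    have hM := hmrec j hj hjlt i
    -- max property
    have hmax : (∀ l ∈ C (j + 1), S i l ≤ m (j + 1) i) ∧
        ∃ l ∈ C (j + 1), S i l = m (j + 1) i := by
      constructor
      · intro l hl
        rw [hCsplit j hjlt, Finset.mem_union] at hl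
        rcases hl with hl | hl
        · exact le_trans (hub l hl) (hM ▸ le_max_left _ _)
        · exact le_trans (hub' l hl) (hM ▸ le_max_right _ _)
      · rcases le_total (mtil (j + 1) i) (m j i) with h | h
        · obtain ⟨l, hl, he⟩ := hex
          refine ⟨l, by rw [hCsplit j hjlt]; exact Finset.mem_union_left _ hl, ?_⟩
          rw [he, hM, max_eq_left h]
        · obtain ⟨l, hl, he⟩ := hex'
          refine ⟨l, by rw [hCsplit j hjlt]; exact Finset.mem_union_right _ hl, ?_⟩
          rw [he, hM, max_eq_right h]
    have e1 : ∀ x : ℝ, Real.exp (m j i - m (j + 1) i) * Real.exp (x - m j i) =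
        Real.exp (x - m (j + 1) i) := by
      intro x; rw [← Real.exp_add]; ring_nf
    have e2 : ∀ x : ℝ, Real.exp (mtil (j + 1) i - m (j + 1) i) *
        Real.exp (x - mtil (j + 1) i) = Real.exp (x - m (j + 1) i) := by
      intro x; rw [← Real.exp_add]; ring_nf
    have hlsucc : ℓ (j + 1) i = ∑ l ∈ C (j + 1), Real.exp (S i l - m (j + 1) i) := by
      rw [hlrec j hj hjlt i, hlj, hltil (j + 1) (by omega) hT i,
        hCsplit j hjlt, Finset.sum_union (hdisj j), Finset.mul_sum, Finset.mul_sum]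
      congr 1
      · exact Finset.sum_congr rfl fun l _ => e1 _
      · exact Finset.sum_congr rfl fun l _ => e2 _
    refine ⟨hmax, hlsucc, ?_⟩
    have hljne : ℓ j i ≠ 0 := by
      obtain ⟨l₀, hl₀, _⟩ := hex
      have : 0 < ∑ l ∈ C j, Real.exp (S i l - m j i) :=
        Finset.sum_pos (fun l _ => Real.exp_pos _) ⟨l₀, hl₀⟩
      rw [hlj]; exact ne_of_gt this
    rw [hOrec j hj hjlt i, hOj]
    congr 1
    rw [hCsplit j hjlt, Finset.sum_union (hdisj j)]
    congr 1
    · rw [smul_smul, mul_comm (ℓ j i), mul_assoc, mul_inv_cancel₀ hljne, mul_one,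
        Finset.smul_sum]
      refine Finset.sum_congr rfl fun l _ => ?_
      rw [smul_smul, e1]
    · rw [Finset.smul_sum]
      refine Finset.sum_congr rfl fun l _ => ?_
      rw [smul_smul, e2]
end

section
/- With the block recursion of the FlashAttention forward pass (blocks J_1, …, J_{T_c} partitioning {1, …, N}, and m^{(j)}, ℓ^{(j)}, O^{(j)} defined recursively from S = QK^⊤ and V as in Algorithm 1), the final output satisfies O^{(T_c)} = softmax(QK^⊤) V, where softmax is applied to each row of QK^⊤. (Correctness part of Theorem 1.) -/
open Matrix

/-- **Correctness part of Theorem 1.**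

With the block recursion of the FlashAttention forward pass (blocks `J_1, …, J_{T_c}`
partitioning `{1, …, N}` via boundaries `b 0 = 0 < b 1 < ⋯ < b T_c = N`, and
`m⁽ʲ⁾, ℓ⁽ʲ⁾, O⁽ʲ⁾` defined recursively from `S = QKᵀ` and `V` as in Algorithm 1),
the final output satisfies `O⁽ᵀᶜ⁾ = softmax(QKᵀ) V`, with softmax applied row-wise. -/
theorem flash_attention_correctness
    {N d Tc : ℕ} (hTc : 1 ≤ Tc)
    (Q K V : Matrix (Fin N) (Fin d) ℝ)
    (S : Matrix (Fin N) (Fin N) ℝ) (hS : S = Q * Kᵀ)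
    (b : ℕ → ℕ) (hb0 : b 0 = 0) (hbT : b Tc = N)
    (hbmono : ∀ j < Tc, b j < b (j + 1))
    (J : ℕ → Finset (Fin N))
    (hJ : ∀ j, J j = Finset.univ.filter fun l : Fin N => b (j - 1) ≤ (l : ℕ) ∧ (l : ℕ) < b j)
    (mtil ltil m ℓ : ℕ → Fin N → ℝ)
    (O : ℕ → Fin N → Fin d → ℝ)
    (hmtil : ∀ j, 1 ≤ j → j ≤ Tc → ∀ i,
      (∀ l ∈ J j, S i l ≤ mtil j i) ∧ ∃ l ∈ J j, S i l = mtil j i)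
    (hltil : ∀ j, 1 ≤ j → j ≤ Tc → ∀ i,
      ltil j i = ∑ l ∈ J j, Real.exp (S i l - mtil j i))
    (hm1 : ∀ i, m 1 i = mtil 1 i)
    (hl1 : ∀ i, ℓ 1 i = ltil 1 i)
    (hO1 : ∀ i, O 1 i =
      (ltil 1 i)⁻¹ • ∑ l ∈ J 1, Real.exp (S i l - mtil 1 i) • V l)
    (hmrec : ∀ j, 1 ≤ j → j < Tc → ∀ i,
      m (j + 1) i = max (m j i) (mtil (j + 1) i))
    (hlrec : ∀ j, 1 ≤ j → j < Tc → ∀ i,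
      ℓ (j + 1) i = Real.exp (m j i - m (j + 1) i) * ℓ j i +
        Real.exp (mtil (j + 1) i - m (j + 1) i) * ltil (j + 1) i)
    (hOrec : ∀ j, 1 ≤ j → j < Tc → ∀ i,
      O (j + 1) i = (ℓ (j + 1) i)⁻¹ •
        ((ℓ j i * Real.exp (m j i - m (j + 1) i)) • O j i +
          Real.exp (mtil (j + 1) i - m (j + 1) i) •
            ∑ l ∈ J (j + 1), Real.exp (S i l - mtil (j + 1) i) • V l)) :
    ∀ i, O Tc i = ∑ l, softmax ((Q * Kᵀ) i) l • V l := by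

  have hjb : ∀ j, j ≤ Tc → j ≤ b j := by
    intro j hj
    induction j with
    | zero => omega
    | succ k ih =>
      have h1 := hbmono k (by omega)
      have h2 := ih (by omega)
      omega
  have hN : 0 < N := by
    have := hjb Tc le_rfl
    omega
  intro i
  subst hS
  have key : ∀ j, 1 ≤ j → j ≤ Tc →
      (ℓ j i = ∑ l ∈ Finset.univ.filter (fun l : Fin N => (l : ℕ) < b j),
          Real.exp ((Q * Kᵀ) i l - m j i)) ∧
      O j i = (ℓ j i)⁻¹ • ∑ l ∈ Finset.univ.filter (fun l : Fin N => (l : ℕ) < b j),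
          Real.exp ((Q * Kᵀ) i l - m j i) • V l := by
    intro j hj1 hjT
    induction j with
    | zero => omega
    | succ j ih =>
      by_cases hj0 : j = 0
      · subst hj0
        have hJ1 : J 1 = Finset.univ.filter (fun l : Fin N => (l : ℕ) < b 1) := by
          rw [hJ]; ext l; simp [hb0]
        constructor
        · rw [hl1, hm1, hltil 1 le_rfl hTc i, hJ1]
        · rw [hO1, hl1, hm1, hJ1]
      · have hj : 1 ≤ j := by omega
        have hjlt : j < Tc := by omega
        obtain ⟨hlj, hOj⟩ := ih hj (by omega)
        have hbpos : 0 < b j := lt_of_lt_of_le hj (hjb j (by omega))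
        have hmem : (⟨0, hN⟩ : Fin N) ∈
            Finset.univ.filter (fun l : Fin N => (l : ℕ) < b j) := by
          simp [hbpos]
        have hlpos : 0 < ℓ j i := by
          rw [hlj]; exact Finset.sum_pos (fun l _ => Real.exp_pos _) ⟨_, hmem⟩
        have hJ1 : J (j + 1) = Finset.univ.filter
            (fun l : Fin N => b j ≤ (l : ℕ) ∧ (l : ℕ) < b (j + 1)) := by
          rw [hJ]; simp
        have hsplit : Finset.univ.filter (fun l : Fin N => (l : ℕ) < b (j + 1)) =
            Finset.univ.filter (fun l : Fin N => (l : ℕ) < b j) ∪ J (j + 1) := by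
          rw [hJ1]; ext l
          have := hbmono j hjlt
          simp only [Finset.mem_union, Finset.mem_filter, Finset.mem_univ, true_and]
          omega
        have hdisj : Disjoint (Finset.univ.filter (fun l : Fin N => (l : ℕ) < b j))
            (J (j + 1)) := by
          rw [hJ1, Finset.disjoint_left]
          intro l hl hl'
          simp only [Finset.mem_filter, Finset.mem_univ, true_and] at hl hl'
          omega
        have hlnew : ℓ (j + 1) i = ∑ l ∈ Finset.univ.filter
            (fun l : Fin N => (l : ℕ) < b (j + 1)), Real.exp ((Q * Kᵀ) i l - m (j + 1) i) := by
          rw [hsplit, Finset.sum_union hdisj, hlrec j hj hjlt i, hlj,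
            hltil (j + 1) (by omega) hjT i, Finset.mul_sum, Finset.mul_sum]
          congr 1
          · exact Finset.sum_congr rfl fun l _ => by rw [← Real.exp_add]; ring_nf
          · exact Finset.sum_congr rfl fun l _ => by rw [← Real.exp_add]; ring_nf
        refine ⟨hlnew, ?_⟩
        rw [hOrec j hj hjlt i, hOj, hlnew]
        congr 1
        rw [smul_smul]
        have hc : ℓ j i * Real.exp (m j i - m (j + 1) i) * (ℓ j i)⁻¹ =
            Real.exp (m j i - m (j + 1) i) := by
          field_simp
        rw [hc, Finset.smul_sum, Finset.smul_sum, hsplit, Finset.sum_union hdisj]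
        congr 1
        · exact Finset.sum_congr rfl fun l _ => by
            rw [smul_smul, ← Real.exp_add]; ring_nf
        · exact Finset.sum_congr rfl fun l _ => by
            rw [smul_smul, ← Real.exp_add]; ring_nf
  obtain ⟨hlT, hOT⟩ := key Tc hTc le_rfl
  have huniv : Finset.univ.filter (fun l : Fin N => (l : ℕ) < b Tc) =
      (Finset.univ : Finset (Fin N)) := by
    ext l; simp [hbT, l.isLt]
  rw [huniv] at hlT hOT
  rw [hOT, Finset.smul_sum]
  refine Finset.sum_congr rfl fun l _ => ?_
  rw [smul_smul]
  congr 1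
  have hT : (0:ℝ) < ∑ k, Real.exp ((Q * Kᵀ) i k) :=
    Finset.sum_pos (fun k _ => Real.exp_pos _) ⟨⟨0, hN⟩, Finset.mem_univ _⟩
  rw [hlT]
  simp only [softmax, Real.exp_sub, ← Finset.sum_div]
  rw [inv_div, div_mul_div_comm, mul_comm (Real.exp (m Tc i)),
    mul_div_mul_right _ _ (Real.exp_ne_zero _)]
end

section
/- Let N, d, M be positive integers with d ≤ M ≤ N·d. Set B_c := ⌈M / (4d)⌉ and T_c := ⌈N / B_c⌉. Then N²d² / (4M) ≤ N · d · T_c ≤ 8 · N²d² / M. (This is the quantitative core of Theorem 2: the FlashAttention forward pass makes T_c passes over Q and O, each loading Θ(Nd) elements, so its HBM access count N·d·T_c is Θ(N²d²/M).) -/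
/-- The key/value block size chosen by FlashAttention for SRAM of size `M` and head
dimension `d`: `B_c := ⌈M / (4d)⌉` (ceiling of the rational number `M / (4d)`). -/
noncomputable def Bc (M d : ℕ) : ℕ := ⌈(M : ℚ) / (4 * (d : ℚ))⌉₊

/-- The number of key/value blocks for sequence length `N`: `T_c := ⌈N / B_c⌉`. -/
noncomputable def Tc (N M d : ℕ) : ℕ := ⌈(N : ℚ) / (Bc M d : ℚ)⌉₊

/-- **Quantitative core of Theorem 2 (IO complexity of FlashAttention).**
For positive integers `N, d, M` with `d ≤ M ≤ Nd`, setting `B_c = ⌈M/(4d)⌉` and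
`T_c = ⌈N/B_c⌉`, one has `N²d²/(4M) ≤ N·d·T_c ≤ 8·N²d²/M`: the HBM access count
`N·d·T_c` of the FlashAttention forward pass is `Θ(N²d²/M)`. -/
theorem flash_attention_hbm_access_bounds (N d M : ℕ)
    (hN : 0 < N) (hd : 0 < d) (hM : 0 < M) (hdM : d ≤ M) (hMNd : M ≤ N * d) :
    ((N : ℚ) ^ 2 * (d : ℚ) ^ 2) / (4 * (M : ℚ)) ≤ (N : ℚ) * (d : ℚ) * (Tc N M d : ℚ) ∧
    (N : ℚ) * (d : ℚ) * (Tc N M d : ℚ) ≤ 8 * (N : ℚ) ^ 2 * (d : ℚ) ^ 2 / (M : ℚ) := by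
  have hd' : (0:ℚ) < d := by exact_mod_cast hd
  have hM' : (0:ℚ) < M := by exact_mod_cast hM
  have hN' : (0:ℚ) < N := by exact_mod_cast hN
  have hdM' : (d:ℚ) ≤ M := by exact_mod_cast hdM
  have hMNd' : (M:ℚ) ≤ N * d := by exact_mod_cast hMNd
  have hxpos : (0:ℚ) < (M:ℚ) / (4 * d) := by positivity
  have hBpos : 0 < Bc M d := Nat.ceil_pos.mpr hxpos
  have hBq : (0:ℚ) < (Bc M d : ℚ) := by exact_mod_cast hBpos
  have hBl : (M:ℚ) / (4 * d) ≤ (Bc M d : ℚ) := Nat.le_ceil _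
  have hBu : (Bc M d : ℚ) < (M:ℚ) / (4 * d) + 1 := Nat.ceil_lt_add_one hxpos.le
  have hTl : (N:ℚ) / (Bc M d : ℚ) ≤ (Tc N M d : ℚ) := Nat.le_ceil _
  have hTu : (Tc N M d : ℚ) < (N:ℚ) / (Bc M d : ℚ) + 1 :=
    Nat.ceil_lt_add_one (by positivity)
  have hTq : (0:ℚ) ≤ (Tc N M d : ℚ) := by positivity
  -- multiplied-out versions of the ceiling bounds
  have h1 : (M:ℚ) ≤ (Bc M d : ℚ) * (4 * d) := by
    rwa [div_le_iff₀ (by positivity)] at hBl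
  have h2 : ((Bc M d : ℚ) - 1) * (4 * d) < M := by
    rw [← lt_div_iff₀ (by positivity : (0:ℚ) < 4 * d)]; linarith
  have h3 : (N:ℚ) ≤ (Tc N M d : ℚ) * (Bc M d : ℚ) := by
    rwa [div_le_iff₀ hBq] at hTl
  have h4 : ((Tc N M d : ℚ) - 1) * (Bc M d : ℚ) < N := by
    rw [← lt_div_iff₀ hBq]; linarith
  -- B ≤ 5M/(4d), in multiplied form
  have h5 : 4 * (d:ℚ) * (Bc M d : ℚ) ≤ 5 * M := by nlinarith [h2, hdM']
  -- 4dN ≤ 5MT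
  have h6 : 4 * (d:ℚ) * N ≤ 5 * M * (Tc N M d : ℚ) := by
    nlinarith [mul_le_mul_of_nonneg_left h3 (show (0:ℚ) ≤ 4 * d by positivity),
      mul_le_mul_of_nonneg_right h5 hTq]
  -- M(T-1) < 4dN
  have h7 : (M:ℚ) * ((Tc N M d : ℚ) - 1) < 4 * d * N := by
    have key : (M:ℚ) * ((Tc N M d : ℚ) - 1) * (Bc M d : ℚ) <
        4 * d * N * (Bc M d : ℚ) := by
      have a1 := mul_lt_mul_of_pos_left h4 hM'
      have a2 := mul_le_mul_of_nonneg_right h1 hN'.le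
      linarith [a1, a2]
    exact lt_of_mul_lt_mul_right (by linarith) hBq.le
  have hMT : (M:ℚ) * (Tc N M d : ℚ) ≤ 5 * (N * d) := by nlinarith [h7, hMNd']
  constructor
  · rw [div_le_iff₀ (by positivity : (0:ℚ) < 4 * M)]
    linarith [mul_le_mul_of_nonneg_right h6 (show (0:ℚ) ≤ N * d by positivity),
      mul_nonneg (mul_nonneg hM'.le hTq) (mul_nonneg hN'.le hd'.le)]
  · rw [le_div_iff₀ hM']
    linarith [mul_le_mul_of_nonneg_right hMT (show (0:ℚ) ≤ N * d by positivity),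
      mul_nonneg (mul_nonneg hN'.le hN'.le) (mul_nonneg hd'.le hd'.le)]
end
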